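/- Let C be a cost structure over alphabets α, β with costs in ℕ, let k ∈ ℕ, and let C + k denote the cost structure obtained by adding k to every insert, delete, and substitution cost of C. Then for all lists Q and R of lengths m and n respectively, levenshtein C Q R + max(m, n)·k ≤ levenshtein (C + k) Q R. -/

import Mathlib

/-!
Every edit operation of `D` costs at least `k` more than the same operation of `C`. Unfolding the
dynamic-programming recursion of `levenshtein`, each step therefore pays at least `k` more under `D`
and lowers `max m n` by at most one, so induction on the two lists gives the bound.
-/

/-- Costs for the Levenshtein distance (Mathlib's former `Levenshtein.Cost`,
removed from Mathlib; restored here with its old definition). -/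
structure Levenshtein.Cost (α β δ : Type*) where
  /-- Cost to delete an element from a list. -/
  delete : α → δ
  /-- Cost in insert an element into a list. -/
  insert : β → δ
  /-- Cost to substitute one element for another in a list. -/
  substitute : α → β → δ

/-- Mathlib's former `Levenshtein.impl`. -/
def Levenshtein.impl {α β δ : Type*} [AddZeroClass δ] [Min δ]
    (C : Levenshtein.Cost α β δ)
    (xs : List α) (y : β) (d : {r : List δ // 0 < r.length}) : {r : List δ // 0 < r.length} :=
  let ⟨ds, w⟩ := d
  xs.zip (ds.zip ds.tail) |>.foldr
    (init := ⟨[C.insert y + ds.getLast (List.ne_nil_of_length_pos w)], by simp⟩)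
    (fun ⟨x, d₀, d₁⟩ ⟨r, w⟩ =>
      ⟨min (C.delete x + r[0]) (min (C.insert y + d₀) (C.substitute x y + d₁)) :: r, by simp⟩)

/-- Mathlib's former `suffixLevenshtein`. -/
def suffixLevenshtein {α β δ : Type*} [AddZeroClass δ] [Min δ]
    (C : Levenshtein.Cost α β δ) (xs : List α) (ys : List β) :
    {r : List δ // 0 < r.length} :=
  ys.foldr
    (Levenshtein.impl C xs)
    (xs.foldr (init := ⟨[0], by simp⟩) (fun a ⟨r, w⟩ => ⟨(C.delete a + r[0]) :: r, by simp⟩))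

/-- Mathlib's former `levenshtein`. -/
def levenshtein {α β δ : Type*} [AddZeroClass δ] [Min δ]
    (C : Levenshtein.Cost α β δ) (xs : List α) (ys : List β) : δ :=
  let ⟨r, w⟩ := suffixLevenshtein C xs ys
  r[0]

/-- The cost structure obtained by adding `k` to every insert, delete, and
substitution cost of `C`. -/
def Levenshtein.Cost.addConst {α β : Type*} (C : Levenshtein.Cost α β ℕ) (k : ℕ) :
    Levenshtein.Cost α β ℕ where
  delete a := C.delete a + k
  insert b := C.insert b + k
  substitute a b := C.substitute a b + k

namespace Levenshtein

variable {α β δ : Type*} [AddZeroClass δ] [Min δ] (C : Cost α β δ)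

theorem impl_cons (x : α) (xs : List α) (y : β) (d : δ) (ds : List δ)
    (w : 0 < (d :: ds).length) (w' : 0 < ds.length) :
    impl C (x :: xs) y ⟨d :: ds, w⟩ =
      let ⟨r, w⟩ := impl C xs y ⟨ds, w'⟩
      ⟨min (C.delete x + r[0]) (min (C.insert y + d) (C.substitute x y + ds[0])) :: r, by simp⟩ :=
  match ds, w' with | _ :: _, _ => rfl

theorem impl_length (xs : List α) (y : β) (d : {r : List δ // 0 < r.length})
    (w : d.1.length = xs.length + 1) : (impl C xs y d).1.length = xs.length + 1 := by
  induction xs generalizing d with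
  | nil => rfl
  | cons x xs ih =>
    match d, w with
    | ⟨_ :: d₂ :: ds, _⟩, w => exact congrArg (· + 1) (ih ⟨d₂ :: ds, by simp⟩ (by simpa using w))

end Levenshtein

open Levenshtein

theorem Subtype.ext_of_head_tail {γ : Type*} {s t : {l : List γ // 0 < l.length}}
    (h₀ : s.1[0]'s.2 = t.1[0]'t.2) (h : s.1.tail = t.1.tail) : s = t :=
  match s, t with
  | ⟨_ :: _, _⟩, ⟨_ :: _, _⟩ => by simp_all

section

variable {α β δ : Type*} [AddZeroClass δ] [Min δ] (C : Cost α β δ)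

theorem suffixLevenshtein_length (xs : List α) (ys : List β) :
    (suffixLevenshtein C xs ys).1.length = xs.length + 1 := by
  induction ys with
  | nil =>
    induction xs with
    | nil => rfl
    | cons _ xs ih => exact congrArg (· + 1) ih
  | cons y ys ih => exact impl_length C xs y _ ih

theorem suffixLevenshtein_cons_left (x : α) (xs : List α) (ys : List β) :
    suffixLevenshtein C (x :: xs) ys =
      ⟨levenshtein C (x :: xs) ys :: (suffixLevenshtein C xs ys).1, by simp⟩ := by
  induction ys with
  | nil => rfl
  | cons y ys ih =>
    refine Subtype.ext_of_head_tail rfl ?_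
    show (impl C (x :: xs) y (suffixLevenshtein C (x :: xs) ys)).1.tail = _
    rw [ih, impl_cons (w' := by simp [suffixLevenshtein_length])]
    rfl

theorem levenshtein_nil_nil : levenshtein C ([] : List α) ([] : List β) = 0 := rfl

theorem levenshtein_nil_cons (y : β) (ys : List β) :
    levenshtein C ([] : List α) (y :: ys) = C.insert y + levenshtein C [] ys := by
  have hlen := suffixLevenshtein_length C ([] : List α) ys
  show (impl C [] y (suffixLevenshtein C [] ys)).1[0]'(impl C [] y _).2 =
    C.insert y + (suffixLevenshtein C [] ys).1[0]'(suffixLevenshtein C [] ys).2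
  generalize suffixLevenshtein C ([] : List α) ys = s at hlen ⊢
  match s, hlen with
  | ⟨[_], _⟩, _ => rfl

theorem levenshtein_cons_nil (x : α) (xs : List α) :
    levenshtein C (x :: xs) ([] : List β) = C.delete x + levenshtein C xs [] := rfl

theorem levenshtein_cons_cons (x : α) (xs : List α) (y : β) (ys : List β) :
    levenshtein C (x :: xs) (y :: ys) =
      min (C.delete x + levenshtein C xs (y :: ys))
        (min (C.insert y + levenshtein C (x :: xs) ys) (C.substitute x y + levenshtein C xs ys)) := by
  show (impl C (x :: xs) y (suffixLevenshtein C (x :: xs) ys)).1[0]'(impl C _ y _).2 = _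
  rw [suffixLevenshtein_cons_left, impl_cons (w' := by simp [suffixLevenshtein_length])]
  rfl

end

theorem add_mul_le_of_edit_step {d c c' e e' m m' k : ℕ} (hd : d ≤ c + e) (hc : c + k ≤ c')
    (hm : m ≤ m' + 1) (he : e + m' * k ≤ e') : d + m * k ≤ c' + e' :=
  calc d + m * k ≤ c + e + (m' + 1) * k := by gcongr
    _ = (c + k) + (e + m' * k) := by ring
    _ ≤ c' + e' := by gcongr

theorem levenshtein_add_max_length_mul_le {α β : Type*} {C D : Cost α β ℕ} {k : ℕ}
    (hdel : ∀ a, C.delete a + k ≤ D.delete a) (hins : ∀ b, C.insert b + k ≤ D.insert b)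
    (hsub : ∀ a b, C.substitute a b + k ≤ D.substitute a b) (Q : List α) (R : List β) :
    levenshtein C Q R + max Q.length R.length * k ≤ levenshtein D Q R := by
  induction Q generalizing R with
  | nil =>
    induction R with
    | nil => simp [levenshtein_nil_nil]
    | cons y ys ih =>
      rw [levenshtein_nil_cons D]
      exact add_mul_le_of_edit_step (levenshtein_nil_cons C y ys).le (hins y) (by simp) ih
  | cons x xs ihQ =>
    induction R with
    | nil =>
      rw [levenshtein_cons_nil D]
      exact add_mul_le_of_edit_step (levenshtein_cons_nil C x xs).le (hdel x) (by simp) (ihQ [])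
    | cons y ys ihR =>
      have hC := levenshtein_cons_cons C x xs y ys
      rw [levenshtein_cons_cons D]
      refine le_min ?_ (le_min ?_ ?_)
      · exact add_mul_le_of_edit_step (hC.trans_le (min_le_left _ _)) (hdel x) (by grind)
          (ihQ (y :: ys))
      · exact add_mul_le_of_edit_step (hC.trans_le ((min_le_right _ _).trans (min_le_left _ _)))
          (hins y) (by grind) ihR
      · exact add_mul_le_of_edit_step (hC.trans_le ((min_le_right _ _).trans (min_le_right _ _)))
          (hsub x y) (by simp) (ihQ ys)

/-- **Lower bound for shifted gap penalties (Lemma 3, lower half).**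
Adding `k` to every cost increases the Levenshtein distance by at least
`max(m, n)·k`, where `m` and `n` are the lengths of the two lists, since every
alignment uses at least `max(m, n)` edit operations. -/
theorem levenshtein_addConst_ge {α β : Type*} (C : Levenshtein.Cost α β ℕ) (k : ℕ)
    (Q : List α) (R : List β) :
    levenshtein C Q R + max Q.length R.length * k ≤
      levenshtein (Levenshtein.Cost.addConst C k) Q R :=
  levenshtein_add_max_length_mul_le (fun _ => le_rfl) (fun _ => le_rfl) (fun _ _ => le_rfl) Q R
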